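/- Let G, K be countable discrete groups, π^i a unitary representation of G on a Hilbert space H_i and ρ^i a unitary representation of K on H_i, for i = 1, 2. Let ψ₁,…,ψₙ ∈ H₁ and φ₁,…,φₙ ∈ H₂ be such that {ρ¹_k π¹_g ψ_j} and {ρ²_k π²_g φ_j} are frames (indexed by (k,g,j) ∈ K×G×{1,…,n}) for H₁ and H₂. If for each j the Bessel sequences {π¹_g ψ_j}_{g∈G} and {π²_g φ_j}_{g∈G} are strongly disjoint (i.e. Σ_{g∈G} ⟨h₁, π¹_g ψ_j⟩·conj(⟨h₂, π²_g φ_j⟩) = 0 for all h₁ ∈ H₁, h₂ ∈ H₂), then the two frames are strongly disjoint: Σ_{k,g,j} ⟨h₁, ρ¹_k π¹_g ψ_j⟩·conj(⟨h₂, ρ²_k π²_g φ_j⟩) = 0 for all h₁ ∈ H₁, h₂ ∈ H₂. -/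

import Mathlib

/-!
Both families have square-summable coefficients (a lower frame bound forces its series to
converge), so by Cauchy–Schwarz the sum over `K × G × Fin n` converges absolutely and can be
computed fibre by fibre over `k ∈ K`. Unitarity of `ρ_k` moves it onto `h₁` and `h₂`, and what is
left is the finite sum over `j` of the `G`-sums, each of which vanishes by hypothesis.
-/

open ComplexConjugate
open scoped InnerProductSpace

section StronglyDisjoint

variable {𝕜 : Type*} [RCLike 𝕜] {E F : Type*}
  [NormedAddCommGroup E] [InnerProductSpace 𝕜 E] [NormedAddCommGroup F] [InnerProductSpace 𝕜 F]

variable (𝕜) in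
def StronglyDisjoint {ι : Type*} (u : ι → E) (v : ι → F) : Prop :=
  ∀ (h₁ : E) (h₂ : F), ∑' i, ⟪h₁, u i⟫_𝕜 * conj ⟪h₂, v i⟫_𝕜 = 0

/-- A divergent `tsum` is `0`, which the lower frame bound rules out for `h ≠ 0`. -/
theorem summable_norm_inner_sq_of_lower_bound {ι : Type*} {v : ι → E} {C : ℝ} (hC : 0 < C)
    (hlow : ∀ h : E, C * ‖h‖ ^ 2 ≤ ∑' i, ‖⟪h, v i⟫_𝕜‖ ^ 2) (h : E) :
    Summable fun i => ‖⟪h, v i⟫_𝕜‖ ^ 2 := by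
  rcases eq_or_ne h 0 with rfl | hh
  · simp
  by_contra hns
  have := hlow h
  rw [tsum_eq_zero_of_not_summable hns] at this
  have : 0 < C * ‖h‖ ^ 2 := by positivity
  linarith

theorem summable_mul_conj_of_summable_sq {ι : Type*} {a b : ι → 𝕜}
    (ha : Summable fun i => ‖a i‖ ^ 2) (hb : Summable fun i => ‖b i‖ ^ 2) :
    Summable fun i => a i * conj (b i) :=
  .of_norm_bounded ((ha.add hb).div_const 2) fun i => by
    rw [norm_mul, RCLike.norm_conj]
    nlinarith [sq_nonneg (‖a i‖ - ‖b i‖)]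

theorem StronglyDisjoint.comp_equiv {ι ι' : Type*} {u : ι → E} {v : ι → F}
    (hd : StronglyDisjoint 𝕜 u v) (e : ι' ≃ ι) :
    StronglyDisjoint 𝕜 (u ∘ e) (v ∘ e) := fun h₁ h₂ =>
  (e.tsum_eq fun i => ⟪h₁, u i⟫_𝕜 * conj ⟪h₂, v i⟫_𝕜).trans (hd h₁ h₂)

theorem StronglyDisjoint.map_linearIsometryEquiv {ι : Type*} {u : ι → E} {v : ι → F}
    (hd : StronglyDisjoint 𝕜 u v) (U : E ≃ₗᵢ[𝕜] E) (V : F ≃ₗᵢ[𝕜] F) :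
    StronglyDisjoint 𝕜 (fun i => U (u i)) (fun i => V (v i)) := fun h₁ h₂ => by
  simpa only [U.symm.inner_map_eq_flip, V.symm.inner_map_eq_flip, LinearIsometryEquiv.symm_symm]
    using hd (U.symm h₁) (V.symm h₂)

/-- Square-summable coefficients make the double series absolutely convergent, so it may be
summed fibre by fibre. -/
theorem StronglyDisjoint.of_prod {κ ι : Type*} {u : κ × ι → E} {v : κ × ι → F}
    (hu : ∀ h : E, Summable fun p => ‖⟪h, u p⟫_𝕜‖ ^ 2)
    (hv : ∀ h : F, Summable fun p => ‖⟪h, v p⟫_𝕜‖ ^ 2)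
    (hd : ∀ k, StronglyDisjoint 𝕜 (fun i => u (k, i)) (fun i => v (k, i))) :
    StronglyDisjoint 𝕜 u v := fun h₁ h₂ => by
  have hs := summable_mul_conj_of_summable_sq (hu h₁) (hv h₂)
  rw [hs.tsum_prod' hs.prod_factor]
  simp only [hd _ h₁ h₂, tsum_zero]

end StronglyDisjoint

theorem stmt16 {G K : Type*} [Group G] [Group K]
    {H₁ H₂ : Type*} [NormedAddCommGroup H₁] [InnerProductSpace ℂ H₁]
    [NormedAddCommGroup H₂] [InnerProductSpace ℂ H₂]
    (π₁ : G →* (H₁ ≃ₗᵢ[ℂ] H₁)) (π₂ : G →* (H₂ ≃ₗᵢ[ℂ] H₂))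
    (ρ₁ : K →* (H₁ ≃ₗᵢ[ℂ] H₁)) (ρ₂ : K →* (H₂ ≃ₗᵢ[ℂ] H₂))
    (n : ℕ) (ψ : Fin n → H₁) (φ : Fin n → H₂)
    -- the two families are frames for H₁ and H₂
    (hframe₁ : ∃ C₁ C₂ : ℝ, 0 < C₁ ∧ C₁ ≤ C₂ ∧ ∀ h : H₁,
      C₁ * ‖h‖ ^ 2 ≤ ∑' p : K × G × Fin n,
          ‖(inner ℂ h (ρ₁ p.1 (π₁ p.2.1 (ψ p.2.2))) : ℂ)‖ ^ 2 ∧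
        ∑' p : K × G × Fin n,
          ‖(inner ℂ h (ρ₁ p.1 (π₁ p.2.1 (ψ p.2.2))) : ℂ)‖ ^ 2 ≤ C₂ * ‖h‖ ^ 2)
    (hframe₂ : ∃ C₁ C₂ : ℝ, 0 < C₁ ∧ C₁ ≤ C₂ ∧ ∀ h : H₂,
      C₁ * ‖h‖ ^ 2 ≤ ∑' p : K × G × Fin n,
          ‖(inner ℂ h (ρ₂ p.1 (π₂ p.2.1 (φ p.2.2))) : ℂ)‖ ^ 2 ∧
        ∑' p : K × G × Fin n,
          ‖(inner ℂ h (ρ₂ p.1 (π₂ p.2.1 (φ p.2.2))) : ℂ)‖ ^ 2 ≤ C₂ * ‖h‖ ^ 2)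
    -- for each j, the Bessel sequences {π¹_g ψ_j} and {π²_g φ_j} are strongly disjoint
    (hdisj : ∀ (j : Fin n) (h₁ : H₁) (h₂ : H₂),
      ∑' g : G, (inner ℂ h₁ (π₁ g (ψ j)) : ℂ) * conj (inner ℂ h₂ (π₂ g (φ j)) : ℂ) = 0) :
    -- the two frames are strongly disjoint
    ∀ (h₁ : H₁) (h₂ : H₂),
      ∑' p : K × G × Fin n,
        (inner ℂ h₁ (ρ₁ p.1 (π₁ p.2.1 (ψ p.2.2))) : ℂ) *
          conj (inner ℂ h₂ (ρ₂ p.1 (π₂ p.2.1 (φ p.2.2))) : ℂ) = 0 := by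
  obtain ⟨C₁, _, hC₁, -, hfr₁⟩ := hframe₁
  obtain ⟨D₁, _, hD₁, -, hfr₂⟩ := hframe₂
  have hu := summable_norm_inner_sq_of_lower_bound hC₁ fun h => (hfr₁ h).1
  have hv := summable_norm_inner_sq_of_lower_bound hD₁ fun h => (hfr₂ h).1
  -- the fibre over `k = 1` is the family `π_g ψ_j` itself
  have hu' (h : H₁) : Summable fun q : Fin n × G => ‖⟪h, π₁ q.2 (ψ q.1)⟫_ℂ‖ ^ 2 := by
    simpa [Function.comp_def] using
      ((hu h).prod_factor 1).comp_injective (Equiv.prodComm (Fin n) G).injective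
  have hv' (h : H₂) : Summable fun q : Fin n × G => ‖⟪h, π₂ q.2 (φ q.1)⟫_ℂ‖ ^ 2 := by
    simpa [Function.comp_def] using
      ((hv h).prod_factor 1).comp_injective (Equiv.prodComm (Fin n) G).injective
  have hGn : StronglyDisjoint ℂ (fun q : G × Fin n => π₁ q.1 (ψ q.2))
      (fun q => π₂ q.1 (φ q.2)) :=
    (StronglyDisjoint.of_prod hu' hv' hdisj).comp_equiv (Equiv.prodComm _ _)
  exact StronglyDisjoint.of_prod hu hv fun k => hGn.map_linearIsometryEquiv (ρ₁ k) (ρ₂ k)
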